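/- Let n ≥ 2, let I, J be k-element subsets of {1,...,n}, and let r ≠ r' ∈ {1,...,n} be such that I ≤_r J and I ≤_{r'} J. Then (i) R_{I,J,r} = R_{I,J,r'} as subsets of the set of k-dimensional subspaces of ℂ^n; and (ii) for every V ∈ R_{I,J,r} and every n×k complex matrix M of rank k whose column span is V, the linear span of the rows of M indexed by [r,r')_c intersects the linear span of the rows of M indexed by [r',r)_c only in the zero vector. -/

import Mathlib

/-- Number of inversions of a permutation of `Fin n`. -/
def invNum {n : ℕ} (w : Equiv.Perm (Fin n)) : ℕ :=
  (Finset.univ.filter (fun p : Fin n × Fin n => p.1 < p.2 ∧ w p.2 < w p.1)).card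

/-- Directed edge of the quantum Bruhat graph `Γ_n`. -/
def qbEdge {n : ℕ} (w w' : Equiv.Perm (Fin n)) : Prop :=
  ∃ i j : Fin n, i < j ∧ w' = w * Equiv.swap i j ∧
    (invNum w' = invNum w + 1 ∨ invNum w' + 2 * (j.val - i.val) = invNum w + 1)

/-- Directed edge of the quantum Bruhat graph together with its weight vector in `ℤ^{n-1}`;
coordinate `m : Fin (n-1)` corresponds to the variable `q_{m+1}` (1-indexed). -/
def qbEdgeWt {n : ℕ} (w w' : Equiv.Perm (Fin n)) (c : Fin (n - 1) → ℤ) : Prop :=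
  ∃ i j : Fin n, i < j ∧ w' = w * Equiv.swap i j ∧
    ((invNum w' = invNum w + 1 ∧ c = 0) ∨
     (invNum w' + 2 * (j.val - i.val) = invNum w + 1 ∧
      c = fun m => if i.val ≤ m.val ∧ m.val < j.val then 1 else 0))

/-- Directed paths in the quantum Bruhat graph from `u` to `v`,
recording the number of edges and the total weight. -/
inductive qbPathWt {n : ℕ} :
    Equiv.Perm (Fin n) → Equiv.Perm (Fin n) → ℕ → (Fin (n - 1) → ℤ) → Prop
  | refl (u : Equiv.Perm (Fin n)) : qbPathWt u u 0 0
  | step {u w v : Equiv.Perm (Fin n)} {len : ℕ} {c c' : Fin (n - 1) → ℤ} :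
      qbEdgeWt u w c → qbPathWt w v len c' → qbPathWt u v (len + 1) (c + c')

/-- `ℓ(u,v)`: minimal number of edges of a directed path from `u` to `v` in `Γ_n`. -/
noncomputable def qbDist {n : ℕ} (u v : Equiv.Perm (Fin n)) : ℕ :=
  sInf {k | ∃ c, qbPathWt u v k c}

/-- `depth(A,B)`: max over `0 ≤ x ≤ n` of `#(B ∩ {1,…,x}) − #(A ∩ {1,…,x})`
(`Fin n` is 0-indexed, so `{1,…,x}` corresponds to `val < x`). -/
def depthAB {n : ℕ} (A B : Finset (Fin n)) : ℕ :=
  (Finset.range (n + 1)).sup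
    (fun x => (B.filter (fun b => b.val < x)).card - (A.filter (fun a => a.val < x)).card)

/-- `w[k] = {w(1),…,w(k)}`. -/
def permSet {n : ℕ} (w : Equiv.Perm (Fin n)) (k : ℕ) : Finset (Fin n) :=
  (Finset.univ.filter (fun i : Fin n => i.val < k)).image w

/-- The Gale order on subsets of `Fin n` (componentwise comparison of sorted lists). -/
def galeLE {n : ℕ} (A B : Finset (Fin n)) : Prop :=
  A.card = B.card ∧ ∀ (k : ℕ) (hA : A.card = k) (hB : B.card = k) (t : Fin k),
    A.orderEmbOfFin hA t ≤ B.orderEmbOfFin hB t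

/-- The shifted Gale order `≤_r`; `r : Fin n` encodes the paper's `r = r.val + 1`, and
`x ≤_r y` iff `x - r ≤ y - r` in `Fin n`. -/
def shiftedGaleLE {n : ℕ} (r : Fin n) (A B : Finset (Fin n)) : Prop :=
  galeLE (A.image (fun x => x - r)) (B.image (fun x => x - r))

/-- The closed cyclic interval `[a,b]_c` in `Fin n`. -/
def cycIcc {n : ℕ} (a b : Fin n) : Finset (Fin n) :=
  Finset.univ.filter (fun x => (x - a).val ≤ (b - a).val)

/-- The half-open cyclic interval `[a,b)_c` in `Fin n`. -/
def cycIco {n : ℕ} (a b : Fin n) : Finset (Fin n) :=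
  Finset.univ.filter (fun x => (x - a).val < (b - a).val)

/-- A complete flag in `ℂ^n`: a chain `F_0 ⊆ F_1 ⊆ ⋯ ⊆ F_n` with `dim F_i = i`. -/
structure CompleteFlag (n : ℕ) where
  space : ℕ → Submodule ℂ (Fin n → ℂ)
  mono : Monotone space
  dim_eq : ∀ i, i ≤ n → Module.finrank ℂ (space i) = i

/-- The coordinate projection `Proj_S` (zeroing out coordinates outside `S`). -/
noncomputable def projS {n : ℕ} (S : Finset (Fin n)) : (Fin n → ℂ) →ₗ[ℂ] (Fin n → ℂ) :=
  LinearMap.pi (fun i => if i ∈ S then LinearMap.proj i else 0)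

/-- `dim Proj_S (V)`. -/
noncomputable def projDim {n : ℕ} (S : Finset (Fin n)) (V : Submodule ℂ (Fin n → ℂ)) : ℕ :=
  Module.finrank ℂ (V.map (projS S))

/-- Membership in the tilted Richardson variety `T_{u,v,a}` (rank conditions, `≤`). -/
def memT {n : ℕ} [NeZero n] (u v : Equiv.Perm (Fin n)) (a : ℕ → Fin n)
    (F : CompleteFlag n) : Prop :=
  ∀ i : ℕ, 1 ≤ i → i ≤ n - 1 → ∀ j : Fin n,
    projDim (cycIcc (a i) j) (F.space i) ≤ (permSet u i ∩ cycIcc (a i) j).card ∧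
    projDim (cycIcc j (a i - 1)) (F.space i) ≤ (permSet v i ∩ cycIcc j (a i - 1)).card

/-- Membership in the open tilted Richardson variety `T°_{u,v,a}` (rank conditions, `=`). -/
def memT0 {n : ℕ} [NeZero n] (u v : Equiv.Perm (Fin n)) (a : ℕ → Fin n)
    (F : CompleteFlag n) : Prop :=
  ∀ i : ℕ, 1 ≤ i → i ≤ n - 1 → ∀ j : Fin n,
    projDim (cycIcc (a i) j) (F.space i) = (permSet u i ∩ cycIcc (a i) j).card ∧
    projDim (cycIcc j (a i - 1)) (F.space i) = (permSet v i ∩ cycIcc j (a i - 1)).card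

/-- `M` is a matrix representative of the flag `F`: the first `i` columns span `F_i`. -/
def IsFlagMatrix {n : ℕ} (F : CompleteFlag n) (M : Matrix (Fin n) (Fin n) ℂ) : Prop :=
  ∀ i : ℕ, i ≤ n →
    Submodule.span ℂ ((fun j : Fin n => M.transpose j) '' {j : Fin n | j.val < i}) = F.space i

/-- The Plücker minor `P_I(M)`: the determinant of the submatrix of `M` on rows `I`
and the first `#I` columns. -/
noncomputable def minorP {n : ℕ} (M : Matrix (Fin n) (Fin n) ℂ) (I : Finset (Fin n)) : ℂ :=
  Matrix.det (M.submatrix (fun t : Fin I.card => I.orderEmbOfFin rfl t)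
    (fun t : Fin I.card => Fin.castLE (by simpa using I.card_le_univ) t))

/-- The sequence `a` is flat for `(u,v)`. -/
def IsFlat {n : ℕ} (u v : Equiv.Perm (Fin n)) (a : ℕ → Fin n) : Prop :=
  (∀ k, 1 ≤ k → k ≤ n - 1 → shiftedGaleLE (a k) (permSet u k) (permSet v k)) ∧
  (∀ k, 2 ≤ k → k ≤ n - 1 → shiftedGaleLE (a k) (permSet u (k - 1)) (permSet v (k - 1)))

/-- The tilted Rothe diagram `D_a^↓(u)`; the pair `(i,k) : Fin n × Fin n` encodes the
paper's pair `(i.val + 1, k.val + 1)`. -/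
def Ddown {n : ℕ} (a : ℕ → Fin n) (u : Equiv.Perm (Fin n)) : Finset (Fin n × Fin n) :=
  Finset.univ.filter (fun p : Fin n × Fin n =>
    p.2.val < n - 1 ∧ (p.1 - a (p.2.val + 1)).val < (u p.2 - a (p.2.val + 1)).val ∧
      p.2.val < (u⁻¹ p.1).val)

/-- The tilted Rothe diagram `D_a^↑(v)`. -/
def Dup {n : ℕ} (a : ℕ → Fin n) (v : Equiv.Perm (Fin n)) : Finset (Fin n × Fin n) :=
  Finset.univ.filter (fun p : Fin n × Fin n =>
    p.2.val < n - 1 ∧ (v p.2 - a (p.2.val + 1)).val < (p.1 - a (p.2.val + 1)).val ∧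
      p.2.val < (v⁻¹ p.1).val)

/-- Membership in the cyclically rotated Grassmannian Richardson variety `R_{I,J,r}`. -/
def memR {n : ℕ} [NeZero n] (I J : Finset (Fin n)) (r : Fin n)
    (V : Submodule ℂ (Fin n → ℂ)) : Prop :=
  ∀ j : Fin n,
    projDim (cycIcc r j) V ≤ (I ∩ cycIcc r j).card ∧
    projDim (cycIcc j (r - 1)) V ≤ (J ∩ cycIcc j (r - 1)).card
section AuxRotatedRichardson

open Finset Module

variable {n : ℕ} [NeZero n]

lemma fin_sub_val (a b : Fin n) :
    (a - b).val = if b.val ≤ a.val then a.val - b.val else a.val + n - b.val := by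
  have hb := b.isLt
  have ha := a.isLt
  rw [Fin.sub_def]
  split_ifs with h
  · simp only
    have : n - b.val + a.val = n + (a.val - b.val) := by omega
    rw [this, Nat.add_mod_left, Nat.mod_eq_of_lt (by omega)]
  · simp only
    rw [Nat.mod_eq_of_lt (by omega)]
    omega

lemma mem_cycIcc {a b x : Fin n} : x ∈ cycIcc a b ↔ (x - a).val ≤ (b - a).val := by
  simp [cycIcc]

lemma mem_cycIco {a b x : Fin n} : x ∈ cycIco a b ↔ (x - a).val < (b - a).val := by
  simp [cycIco]

lemma fin_one_val (hn : 2 ≤ n) : (1 : Fin n).val = 1 := by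
  rw [Fin.val_one']
  exact Nat.mod_eq_of_lt (by omega)

-- (A)
lemma cycIcc_sub_one (hn : 2 ≤ n) {r r' : Fin n} (h : r ≠ r') :
    cycIcc r (r' - 1) = cycIco r r' := by
  have h1 := fin_one_val hn
  have hne : r'.val ≠ r.val := fun hv => h (Fin.ext hv.symm)
  ext x
  have hx := x.isLt; have hr := r.isLt; have hr' := r'.isLt
  simp only [mem_cycIcc, mem_cycIco, fin_sub_val, h1]
  split_ifs <;> omega

set_option linter.unusedSectionVars false

lemma cyc_union (hn : 2 ≤ n) {r r' : Fin n} (h : r ≠ r') :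
    cycIco r r' ∪ cycIco r' r = Finset.univ := by
  have hne : r'.val ≠ r.val := fun hv => h (Fin.ext hv.symm)
  ext x
  have hx := x.isLt; have hr := r.isLt; have hr' := r'.isLt
  simp only [mem_union, mem_cycIco, fin_sub_val, Finset.mem_univ, iff_true]
  split_ifs <;> omega

lemma cyc_disj (hn : 2 ≤ n) {r r' : Fin n} (h : r ≠ r') :
    Disjoint (cycIco r r') (cycIco r' r) := by
  have hne : r'.val ≠ r.val := fun hv => h (Fin.ext hv.symm)
  rw [Finset.disjoint_left]
  intro x h1 h2
  have hx := x.isLt; have hr := r.isLt; have hr' := r'.isLt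
  simp only [mem_cycIco, fin_sub_val] at h1 h2
  split_ifs at h1 h2 <;> omega

lemma cyc_sub1 (hn : 2 ≤ n) {r r' j : Fin n} (h : r ≠ r') (hj : j ∈ cycIco r' r) :
    cycIcc r' j ⊆ cycIco r' r := by
  have hne : r'.val ≠ r.val := fun hv => h (Fin.ext hv.symm)
  intro x hx'
  have hx := x.isLt; have hr := r.isLt; have hr' := r'.isLt; have hjl := j.isLt
  simp only [mem_cycIcc, mem_cycIco, fin_sub_val] at *
  split_ifs at * <;> omega

lemma cyc_split1 (hn : 2 ≤ n) {r r' j : Fin n} (h : r ≠ r') (hj : j ∈ cycIco r' r) :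
    cycIcc r j = cycIco r r' ∪ cycIcc r' j := by
  have hne : r'.val ≠ r.val := fun hv => h (Fin.ext hv.symm)
  ext x
  have hx := x.isLt; have hr := r.isLt; have hr' := r'.isLt; have hjl := j.isLt
  simp only [mem_cycIcc, mem_cycIco, mem_union, fin_sub_val] at *
  split_ifs at * <;> omega

lemma cyc_sub3 (hn : 2 ≤ n) {r r' j : Fin n} (h : r ≠ r') (hj : j ∈ cycIco r' r) :
    cycIcc j (r - 1) ⊆ cycIco r' r := by
  have h1 := fin_one_val hn
  have hne : r'.val ≠ r.val := fun hv => h (Fin.ext hv.symm)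
  intro x hx'
  have hx := x.isLt; have hr := r.isLt; have hr' := r'.isLt; have hjl := j.isLt
  simp only [mem_cycIcc, mem_cycIco, fin_sub_val, h1] at *
  split_ifs at * <;> omega

set_option maxHeartbeats 2000000 in
lemma cyc_split3 (hn : 2 ≤ n) {r r' j : Fin n} (h : r ≠ r') (hj : j ∈ cycIco r' r) :
    cycIcc j (r' - 1) = cycIcc j (r - 1) ∪ cycIco r r' := by
  have h1 := fin_one_val hn
  have hne : r'.val ≠ r.val := fun hv => h (Fin.ext hv.symm)
  ext x
  have hx := x.isLt; have hr := r.isLt; have hr' := r'.isLt; have hjl := j.isLt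
  simp only [mem_cycIcc, mem_cycIco, mem_union, fin_sub_val, h1] at *
  split_ifs at * <;> omega

lemma projS_apply (S : Finset (Fin n)) (x : Fin n → ℂ) (i : Fin n) :
    projS S x i = if i ∈ S then x i else 0 := by
  by_cases h : i ∈ S <;> simp [projS, h]

lemma mem_ker_projS {S : Finset (Fin n)} {x : Fin n → ℂ} :
    x ∈ LinearMap.ker (projS S) ↔ ∀ i ∈ S, x i = 0 := by
  simp only [LinearMap.mem_ker, funext_iff, projS_apply]
  constructor
  · intro h i hi; have := h i; simp [hi] at this; exact this
  · intro h i; by_cases hi : i ∈ S <;> simp [hi, h]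

lemma ker_projS_anti {S T : Finset (Fin n)} (h : S ⊆ T) :
    LinearMap.ker (projS T) ≤ LinearMap.ker (projS S) := by
  intro x hx
  rw [mem_ker_projS] at *
  exact fun i hi => hx i (h hi)

lemma ker_projS_union (S T : Finset (Fin n)) :
    LinearMap.ker (projS (S ∪ T)) = LinearMap.ker (projS S) ⊓ LinearMap.ker (projS T) := by
  ext x
  simp only [Submodule.mem_inf, mem_ker_projS, Finset.mem_union]
  constructor
  · intro h; exact ⟨fun i hi => h i (Or.inl hi), fun i hi => h i (Or.inr hi)⟩
  · rintro ⟨h1, h2⟩ i (hi | hi); exacts [h1 i hi, h2 i hi]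

lemma ker_projS_univ : LinearMap.ker (projS (Finset.univ : Finset (Fin n))) = ⊥ := by
  ext x; simp [LinearMap.mem_ker, funext_iff, projS_apply]

lemma ker_projS_empty : LinearMap.ker (projS (∅ : Finset (Fin n))) = ⊤ := by
  ext x; simp [LinearMap.mem_ker, funext_iff, projS_apply]

set_option synthInstance.maxHeartbeats 800000 in
lemma projDim_add (S : Finset (Fin n)) (V : Submodule ℂ (Fin n → ℂ)) :
    projDim S V + finrank ℂ (V ⊓ LinearMap.ker (projS S) : Submodule ℂ (Fin n → ℂ)) =
      finrank ℂ V := by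
  set f := (projS S).comp V.subtype with hf
  have h1 : LinearMap.range f = V.map (projS S) := by
    rw [hf, LinearMap.range_comp, Submodule.range_subtype]
  have h2 : LinearMap.ker f = Submodule.comap V.subtype (V ⊓ LinearMap.ker (projS S)) := by
    rw [hf, LinearMap.ker_comp]
    ext x
    simp [Submodule.mem_comap, x.2]
  have e := Submodule.comapSubtypeEquivOfLe (inf_le_left : V ⊓ LinearMap.ker (projS S) ≤ V)
  have h3 : finrank ℂ (LinearMap.ker f) =
      finrank ℂ (V ⊓ LinearMap.ker (projS S) : Submodule ℂ (Fin n → ℂ)) := by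
    rw [h2]; exact e.finrank_eq
  have := LinearMap.finrank_range_add_finrank_ker f
  rw [h1, h3] at this
  exact this

lemma projDim_univ (V : Submodule ℂ (Fin n → ℂ)) :
    projDim Finset.univ V = finrank ℂ V := by
  have := projDim_add (Finset.univ : Finset (Fin n)) V
  rw [ker_projS_univ, inf_bot_eq] at this
  simpa using this

lemma projDim_empty (V : Submodule ℂ (Fin n → ℂ)) : projDim ∅ V = 0 := by
  have := projDim_add (∅ : Finset (Fin n)) V
  rw [ker_projS_empty, inf_top_eq] at this
  omega

lemma projDim_mono {S T : Finset (Fin n)} (h : S ⊆ T) (V : Submodule ℂ (Fin n → ℂ)) :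
    projDim S V ≤ projDim T V := by
  have h1 := projDim_add S V
  have h2 := projDim_add T V
  have h3 : finrank ℂ (V ⊓ LinearMap.ker (projS T) : Submodule ℂ (Fin n → ℂ)) ≤
      finrank ℂ (V ⊓ LinearMap.ker (projS S) : Submodule ℂ (Fin n → ℂ)) :=
    Submodule.finrank_mono (inf_le_inf_left V (ker_projS_anti h))
  omega

lemma projDim_submod (S T : Finset (Fin n)) (V : Submodule ℂ (Fin n → ℂ)) :
    projDim (S ∪ T) V + projDim (S ∩ T) V ≤ projDim S V + projDim T V := by
  have hsup := Submodule.finrank_sup_add_finrank_inf_eq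
    (V ⊓ LinearMap.ker (projS S)) (V ⊓ LinearMap.ker (projS T))
  have hABi : (V ⊓ LinearMap.ker (projS S)) ⊓ (V ⊓ LinearMap.ker (projS T))
      = V ⊓ LinearMap.ker (projS (S ∪ T)) := by
    rw [ker_projS_union]
    ext x
    simp only [Submodule.mem_inf]
    tauto
  have hle : (V ⊓ LinearMap.ker (projS S)) ⊔ (V ⊓ LinearMap.ker (projS T)) ≤
      V ⊓ LinearMap.ker (projS (S ∩ T)) := by
    apply sup_le
    · exact inf_le_inf_left V (ker_projS_anti (Finset.inter_subset_left))
    · exact inf_le_inf_left V (ker_projS_anti (Finset.inter_subset_right))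
  have h4 : finrank ℂ ((V ⊓ LinearMap.ker (projS S)) ⊔ (V ⊓ LinearMap.ker (projS T)) : Submodule ℂ (Fin n → ℂ)) ≤
      finrank ℂ (V ⊓ LinearMap.ker (projS (S ∩ T)) : Submodule ℂ (Fin n → ℂ)) :=
    Submodule.finrank_mono hle
  have h5 := projDim_add (S ∪ T) V
  have h6 := projDim_add (S ∩ T) V
  have h7 := projDim_add S V
  have h8 := projDim_add T V
  rw [hABi] at hsup
  omega

omit [NeZero n] in
lemma gale_count {A B : Finset (Fin n)} (h : galeLE A B) (m : ℕ) :
    (B.filter (fun x => x.val ≤ m)).card ≤ (A.filter (fun x => x.val ≤ m)).card := by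
  obtain ⟨hc, hg⟩ := h
  set K := B.card with hK
  have hA : A.card = K := hc
  have himB : Finset.image (B.orderEmbOfFin rfl) Finset.univ = B := by
    apply Finset.eq_of_subset_of_card_le
    · intro x hx
      simp only [Finset.mem_image] at hx
      obtain ⟨t, _, rfl⟩ := hx
      exact Finset.orderEmbOfFin_mem B rfl t
    · rw [Finset.card_image_of_injective _ (B.orderEmbOfFin rfl).injective]
      simp
  have himA : Finset.image (A.orderEmbOfFin hA) Finset.univ = A := by
    apply Finset.eq_of_subset_of_card_le
    · intro x hx
      simp only [Finset.mem_image] at hx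
      obtain ⟨t, _, rfl⟩ := hx
      exact Finset.orderEmbOfFin_mem A hA t
    · rw [Finset.card_image_of_injective _ (A.orderEmbOfFin hA).injective]
      simp [hA]
  rw [← himB, ← himA, Finset.filter_image, Finset.filter_image,
    Finset.card_image_of_injective _ (B.orderEmbOfFin rfl).injective,
    Finset.card_image_of_injective _ (A.orderEmbOfFin hA).injective]
  apply Finset.card_le_card
  intro t ht
  simp only [Finset.mem_filter, Finset.mem_univ, true_and] at *
  have := hg K hA rfl t
  exact le_trans (by exact_mod_cast this) ht

lemma shifted_gale_count {I J : Finset (Fin n)} {r' : Fin n}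
    (h : shiftedGaleLE r' I J) (b : Fin n) :
    (J ∩ cycIcc r' b).card ≤ (I ∩ cycIcc r' b).card := by
  have hinj : Function.Injective (fun x : Fin n => x - r') := sub_left_injective
  have key : ∀ C : Finset (Fin n), (C ∩ cycIcc r' b).card =
      ((C.image (fun x => x - r')).filter (fun x => x.val ≤ (b - r').val)).card := by
    intro C
    rw [Finset.filter_image, Finset.card_image_of_injective _ hinj]
    congr 1
    ext x
    simp [Finset.mem_filter, Finset.mem_inter, mem_cycIcc, and_comm]
  rw [key I, key J]
  exact gale_count h _

omit [NeZero n] in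
lemma card_inter_union {I S T : Finset (Fin n)} (h : Disjoint S T) :
    (I ∩ (S ∪ T)).card = (I ∩ S).card + (I ∩ T).card := by
  rw [Finset.inter_union_distrib_left]
  exact Finset.card_union_of_disjoint (h.mono Finset.inter_subset_right Finset.inter_subset_right)

lemma key_eqs (hn : 2 ≤ n) {I J : Finset (Fin n)} {k : ℕ} (hI : I.card = k) (hJ : J.card = k)
    {r r' : Fin n} (hne : r ≠ r') (hr' : shiftedGaleLE r' I J)
    {V : Submodule ℂ (Fin n → ℂ)} (hV : memR I J r V) (hfr : finrank ℂ V = k) :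
    projDim (cycIco r r') V = (I ∩ cycIco r r').card ∧
    projDim (cycIco r' r) V = (J ∩ cycIco r' r).card ∧
    (J ∩ cycIco r' r).card = (I ∩ cycIco r' r).card ∧
    projDim (cycIco r r') V + projDim (cycIco r' r) V = k ∧
    (I ∩ cycIco r r').card = (J ∩ cycIco r r').card ∧
    (I ∩ cycIco r r').card + (I ∩ cycIco r' r).card = k ∧
    (J ∩ cycIco r r').card + (J ∩ cycIco r' r).card = k := by
  have hd := cyc_disj hn hne
  have hu := cyc_union hn hne
  have F1 := (hV (r' - 1)).1
  rw [cycIcc_sub_one hn hne] at F1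
  have F2 := (hV r').2
  rw [cycIcc_sub_one hn hne.symm] at F2
  have F3 := shifted_gale_count hr' (r - 1)
  rw [cycIcc_sub_one hn hne.symm] at F3
  have F4I : (I ∩ cycIco r r').card + (I ∩ cycIco r' r).card = k := by
    rw [← card_inter_union hd, hu, Finset.inter_univ, hI]
  have F4J : (J ∩ cycIco r r').card + (J ∩ cycIco r' r).card = k := by
    rw [← card_inter_union hd, hu, Finset.inter_univ, hJ]
  have F5 := projDim_submod (cycIco r r') (cycIco r' r) V
  rw [hu, Finset.disjoint_iff_inter_eq_empty.mp hd, projDim_univ, projDim_empty, hfr] at F5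
  omega

lemma memR_shift (hn : 2 ≤ n) {I J : Finset (Fin n)} {k : ℕ} (hI : I.card = k) (hJ : J.card = k)
    {r r' : Fin n} (hne : r ≠ r') (hr' : shiftedGaleLE r' I J)
    {V : Submodule ℂ (Fin n → ℂ)} (hV : memR I J r V) (hfr : finrank ℂ V = k) :
    memR I J r' V := by
  obtain ⟨eqS, eqT, eJT, hsum, eIS, hkI, hkJ⟩ := key_eqs hn hI hJ hne hr' hV hfr
  have hd := cyc_disj hn hne
  have hu := cyc_union hn hne
  intro j
  have hjcase : j ∈ cycIco r r' ∨ j ∈ cycIco r' r := by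
    have : j ∈ cycIco r r' ∪ cycIco r' r := by rw [hu]; exact Finset.mem_univ j
    exact Finset.mem_union.mp this
  constructor
  · rcases hjcase with hj | hj
    · -- j ∈ S = cycIco r r'
      have hsplit := cyc_split1 hn hne.symm hj  -- cycIcc r' j = cycIco r' r ∪ cycIcc r j
      have hsub := cyc_sub1 hn hne.symm hj      -- cycIcc r j ⊆ cycIco r r'
      have hdisj : Disjoint (cycIco r' r) (cycIcc r j) := hd.symm.mono_right hsub
      have hsm := projDim_submod (cycIco r' r) (cycIcc r j) V
      rw [Finset.disjoint_iff_inter_eq_empty.mp hdisj, projDim_empty] at hsm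
      have hb := (hV j).1
      rw [hsplit, card_inter_union hdisj]
      omega
    · -- j ∈ T = cycIco r' r
      have hsplit := cyc_split1 hn hne hj       -- cycIcc r j = cycIco r r' ∪ cycIcc r' j
      have hsub := cyc_sub1 hn hne hj           -- cycIcc r' j ⊆ cycIco r' r
      have hdisj : Disjoint (cycIco r r') (cycIcc r' j) := hd.mono_right hsub
      have huu : (cycIco r r' ∪ cycIcc r' j) ∪ cycIco r' r = Finset.univ := by
        rw [Finset.union_assoc, Finset.union_eq_right.mpr hsub, hu]
      have hii : (cycIco r r' ∪ cycIcc r' j) ∩ cycIco r' r = cycIcc r' j := by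
        rw [Finset.union_inter_distrib_right, Finset.disjoint_iff_inter_eq_empty.mp hd,
          Finset.inter_eq_left.mpr hsub, Finset.empty_union]
      have hsm := projDim_submod (cycIco r r' ∪ cycIcc r' j) (cycIco r' r) V
      rw [huu, hii, projDim_univ, hfr] at hsm
      have hb := (hV j).1
      rw [hsplit, card_inter_union hdisj] at hb
      omega
  · rcases hjcase with hj | hj
    · -- j ∈ S: target cycIcc j (r'-1); cycIcc j (r-1) = cycIcc j (r'-1) ∪ cycIco r' r
      have hsplit := cyc_split3 hn hne.symm hj
      have hsub := cyc_sub3 hn hne.symm hj      -- cycIcc j (r'-1) ⊆ cycIco r r'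
      have hdisj : Disjoint (cycIcc j (r' - 1)) (cycIco r' r) := hd.mono_left hsub
      have huu : (cycIcc j (r' - 1) ∪ cycIco r' r) ∪ cycIco r r' = Finset.univ := by
        rw [Finset.union_comm (cycIcc j (r' - 1)) (cycIco r' r), Finset.union_assoc,
          Finset.union_eq_right.mpr hsub, Finset.union_comm]
        exact hu
      have hii : (cycIcc j (r' - 1) ∪ cycIco r' r) ∩ cycIco r r' = cycIcc j (r' - 1) := by
        rw [Finset.union_inter_distrib_right, Finset.inter_eq_left.mpr hsub,
          Finset.disjoint_iff_inter_eq_empty.mp hd.symm, Finset.union_empty]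
      have hsm := projDim_submod (cycIcc j (r' - 1) ∪ cycIco r' r) (cycIco r r') V
      rw [huu, hii, projDim_univ, hfr] at hsm
      have hb := (hV j).2
      rw [hsplit, card_inter_union hdisj] at hb
      omega
    · -- j ∈ T: cycIcc j (r'-1) = cycIcc j (r-1) ∪ cycIco r r', cycIcc j (r-1) ⊆ cycIco r' r
      have hsplit := cyc_split3 hn hne hj
      have hsub := cyc_sub3 hn hne hj
      have hdisj : Disjoint (cycIcc j (r - 1)) (cycIco r r') := hd.symm.mono_left hsub
      have hsm := projDim_submod (cycIcc j (r - 1)) (cycIco r r') V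
      rw [Finset.disjoint_iff_inter_eq_empty.mp hdisj, projDim_empty] at hsm
      have hb := (hV j).2
      rw [hsplit, card_inter_union hdisj]
      omega

lemma rowspan_finrank {k : ℕ} (M : Matrix (Fin n) (Fin k) ℂ) (S : Finset (Fin n))
    {V : Submodule ℂ (Fin n → ℂ)}
    (hspan : Submodule.span ℂ (Set.range (fun t : Fin k => M.transpose t)) = V) :
    finrank ℂ (Submodule.span ℂ ((fun i : Fin n => M i) '' ↑S)) = projDim S V := by
  set D : Matrix (Fin n) (Fin n) ℂ := Matrix.diagonal (fun i => if i ∈ S then 1 else 0) with hD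
  have hP : projS S = D.mulVecLin := by
    apply LinearMap.ext; intro x
    funext i
    rw [projS_apply, Matrix.mulVecLin_apply, hD, Matrix.mulVec_diagonal]
    split_ifs <;> simp
  have hV : V = LinearMap.range M.mulVecLin := by
    rw [← hspan, Matrix.range_mulVecLin]; rfl
  have hmap : V.map (projS S) = LinearMap.range (D * M).mulVecLin := by
    rw [hV, hP, Matrix.mulVecLin_mul, LinearMap.range_comp]
  have h1 : projDim S V = (D * M).rank := by
    rw [projDim, hmap]; rfl
  have hrow : ∀ i : Fin n, (D * M) i = if i ∈ S then M i else 0 := by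
    intro i; funext j
    have : (D * M) i j = (if i ∈ S then (1:ℂ) else 0) * M i j := Matrix.diagonal_mul _ M i j
    rw [this]
    split_ifs <;> simp
  have h2 : Submodule.span ℂ (Set.range (fun i : Fin n => (D * M) i)) =
      Submodule.span ℂ ((fun i : Fin n => M i) '' ↑S) := by
    apply le_antisymm
    · rw [Submodule.span_le]
      rintro _ ⟨i, rfl⟩
      simp only
      rw [hrow i]
      split_ifs with h
      · exact Submodule.subset_span ⟨i, by simpa using h, rfl⟩
      · exact (Submodule.span ℂ _).zero_mem
    · rw [Submodule.span_le]
      rintro _ ⟨i, hi, rfl⟩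
      have : M i = (D * M) i := by rw [hrow i]; simp only [Finset.mem_coe] at hi; simp [hi]
      show M i ∈ _
      rw [this]
      exact Submodule.subset_span ⟨i, rfl⟩
  have h3 : (D * M).transpose.rank =
      finrank ℂ (Submodule.span ℂ (Set.range (fun i : Fin n => (D * M) i))) := by
    have : LinearMap.range (D * M).transpose.mulVecLin =
        Submodule.span ℂ (Set.range (D * M).transpose.transpose) :=
      Matrix.range_mulVecLin _
    rw [Matrix.transpose_transpose] at this
    rw [Matrix.rank, this]
  rw [h2] at h3
  rw [h1, ← Matrix.rank_transpose, h3]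

end AuxRotatedRichardson

/-- If `I ≤_r J` and `I ≤_{r'} J` with `r ≠ r'`, then
`R_{I,J,r} = R_{I,J,r'}`, and for any `V ∈ R_{I,J,r}` and matrix representative `M` of `V`,
the spans of the rows of `M` indexed by `[r,r')_c` and by `[r',r)_c` intersect trivially. -/
theorem rotated_richardson (n k : ℕ) [NeZero n] (hn : 2 ≤ n)
    (I J : Finset (Fin n)) (hI : I.card = k) (hJ : J.card = k)
    (r r' : Fin n) (hne : r ≠ r')
    (hr : shiftedGaleLE r I J) (hr' : shiftedGaleLE r' I J) :
    (∀ V : Submodule ℂ (Fin n → ℂ), Module.finrank ℂ V = k →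
      (memR I J r V ↔ memR I J r' V)) ∧
    (∀ V : Submodule ℂ (Fin n → ℂ), Module.finrank ℂ V = k → memR I J r V →
      ∀ M : Matrix (Fin n) (Fin k) ℂ, M.rank = k →
        Submodule.span ℂ (Set.range (fun t : Fin k => M.transpose t)) = V →
        Submodule.span ℂ ((fun i : Fin n => M i) '' ↑(cycIco r r')) ⊓
          Submodule.span ℂ ((fun i : Fin n => M i) '' ↑(cycIco r' r)) = ⊥) := by
  constructor
  · intro V hVr
    exact ⟨fun h => memR_shift hn hI hJ hne hr' h hVr,
           fun h => memR_shift hn hI hJ hne.symm hr h hVr⟩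
  · intro V hVr hmem M _hrank hspan
    obtain ⟨eqS, eqT, eJT, hsum, _, _, _⟩ := key_eqs hn hI hJ hne hr' hmem hVr
    have h1 := rowspan_finrank M (cycIco r r') hspan
    have h2 := rowspan_finrank M (cycIco r' r) hspan
    have h3 := rowspan_finrank M Finset.univ hspan
    rw [projDim_univ, hVr] at h3
    have hsup : Submodule.span ℂ ((fun i : Fin n => M i) '' ↑(cycIco r r')) ⊔
        Submodule.span ℂ ((fun i : Fin n => M i) '' ↑(cycIco r' r)) =
        Submodule.span ℂ ((fun i : Fin n => M i) '' ↑(Finset.univ : Finset (Fin n))) := by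
      rw [← Submodule.span_union, ← Set.image_union, ← Finset.coe_union, cyc_union hn hne]
    have hfin := Submodule.finrank_sup_add_finrank_inf_eq
      (Submodule.span ℂ ((fun i : Fin n => M i) '' ↑(cycIco r r')))
      (Submodule.span ℂ ((fun i : Fin n => M i) '' ↑(cycIco r' r)))
    rw [hsup, h3, h1, h2] at hfin
    have hzero : Module.finrank ℂ
        (Submodule.span ℂ ((fun i : Fin n => M i) '' ↑(cycIco r r')) ⊓
         Submodule.span ℂ ((fun i : Fin n => M i) '' ↑(cycIco r' r)) :
         Submodule ℂ (Fin k → ℂ)) = 0 := by omega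
    exact Submodule.finrank_eq_zero.mp hzero
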